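/- If a distribution over permutations of [n] satisfies the (3,δ)-uniform-induced-ordering property, then the random-threshold secretary algorithm selects the best item with probability at least (1-δ)²/(6(1+δ)). -/
import Mathlib


open scoped Classical

noncomputable section

/-- Probability of an event under a distribution `μ` on permutations of `Fin n`. -/
def prOf {n : ℕ} (μ : Equiv.Perm (Fin n) → ℝ) (E : Set (Equiv.Perm (Fin n))) : ℝ :=
  ∑ π : Equiv.Perm (Fin n), if π ∈ E then μ π else 0

/-- `μ` is a probability distribution on permutations of `Fin n`. -/
def IsDist {n : ℕ} (μ : Equiv.Perm (Fin n) → ℝ) : Prop :=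
  (∀ π, 0 ≤ μ π) ∧ ∑ π : Equiv.Perm (Fin n), μ π = 1

/-- The `(k,δ)`-uniform-induced-ordering property. -/
def UIOP (n k : ℕ) (δ : ℝ) (μ : Equiv.Perm (Fin n) → ℝ) : Prop :=
  ∀ x : Fin k → Fin n, Function.Injective x →
    (1 - δ) / (Nat.factorial k : ℝ) ≤ prOf μ {π | StrictMono (fun i => π (x i))}

/-- Success of the algorithm that observes all items arriving at times `≤ τ` and
afterwards accepts the first item whose value is better than everything seen so far:
there is a time `t > τ` which is the first record after `τ`, and the item arriving
at time `t` is the overall best item. -/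
def ThresholdSuccess {n : ℕ} (τ : Fin n) (v : Fin n → ℝ) (π : Equiv.Perm (Fin n)) : Prop :=
  ∃ t : Fin n, τ < t ∧
    (∀ s : Fin n, τ < s → s < t → ¬ (∀ s' : Fin n, s' < s → v (π.symm s') < v (π.symm s))) ∧
    (∀ s : Fin n, s < t → v (π.symm s) < v (π.symm t)) ∧
    (∀ y : Fin n, v y ≤ v (π.symm t))

lemma prOf_nonneg {n : ℕ} {μ : Equiv.Perm (Fin n) → ℝ} (hμ : ∀ π, 0 ≤ μ π)
    (E : Set (Equiv.Perm (Fin n))) : 0 ≤ prOf μ E :=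
  Finset.sum_nonneg fun π _ => by split_ifs; exacts [hμ π, le_refl 0]

lemma prOf_mono {n : ℕ} {μ : Equiv.Perm (Fin n) → ℝ} (hμ : ∀ π, 0 ≤ μ π)
    {E F : Set (Equiv.Perm (Fin n))} (hEF : E ⊆ F) : prOf μ E ≤ prOf μ F := by
  apply Finset.sum_le_sum
  intro π _
  by_cases hE : π ∈ E
  · simp [hE, hEF hE]
  · simp only [hE, if_false]
    split_ifs
    exacts [hμ π, le_refl 0]

lemma uiop_bound {n : ℕ} {δ : ℝ} {μ : Equiv.Perm (Fin n) → ℝ} (hμ : ∀ π, 0 ≤ μ π)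
    (h : UIOP n 3 δ μ) (a b c : Fin n) (hab : a ≠ b) (hac : a ≠ c) (hbc : b ≠ c) :
    (1 - δ) / 6 ≤ prOf μ {π | π a < π b ∧ π b < π c} := by
  have hinj : Function.Injective ![a, b, c] := by
    intro i j hij
    fin_cases i <;> fin_cases j <;> simp_all
  have key := h ![a, b, c] hinj
  rw [show ((Nat.factorial 3 : ℕ) : ℝ) = 6 by norm_num [Nat.factorial]] at key
  refine key.trans (prOf_mono hμ ?_)
  intro π hπ
  have h01 := hπ (show (0 : Fin 3) < 1 by decide)
  have h12 := hπ (show (1 : Fin 3) < 2 by decide)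
  simp only [Matrix.cons_val_zero, Matrix.cons_val_one, Matrix.head_cons] at h01 h12
  constructor
  · exact h01
  · simpa using h12


/-- if the arrival distribution satisfies the `(3,δ)`-uniform-induced-ordering
property, then the random-threshold secretary algorithm (with uniformly random threshold `τ`)
selects the best item with probability at least `(1-δ)²/(6(1+δ))`. -/
theorem uiop3_secretary (n : ℕ) (hn : 3 ≤ n) (δ : ℝ) (hδ0 : 0 ≤ δ) (hδ1 : δ < 1)
    (μ : Equiv.Perm (Fin n) → ℝ) (hμ : IsDist μ) (h : UIOP n 3 δ μ)
    (v : Fin n → ℝ) (hv : Function.Injective v) :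
    (1 - δ) ^ 2 / (6 * (1 + δ)) ≤
      (1 / (n : ℝ)) * ∑ τ : Fin n, prOf μ {π | ThresholdSuccess τ v π} := by
  have hμ0 := hμ.1
  have hn0 : 0 < n := by omega
  have hnR : (0 : ℝ) < n := by exact_mod_cast hn0
  -- the best item x₁
  obtain ⟨x₁, _, hx₁⟩ := Finset.exists_max_image Finset.univ v ⟨⟨0, hn0⟩, Finset.mem_univ _⟩
  have hmax : ∀ y, v y ≤ v x₁ := fun y => hx₁ y (Finset.mem_univ y)
  -- the second best item x₂
  have hne : (Finset.univ.erase x₁).Nonempty := by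
    rw [← Finset.card_pos, Finset.card_erase_of_mem (Finset.mem_univ _), Finset.card_univ,
      Fintype.card_fin]
    omega
  obtain ⟨x₂, hx₂mem, hx₂⟩ := Finset.exists_max_image (Finset.univ.erase x₁) v hne
  have hx₂x₁ : x₂ ≠ x₁ := (Finset.mem_erase.mp hx₂mem).1
  have hsec : ∀ y, y ≠ x₁ → v y ≤ v x₂ := fun y hy =>
    hx₂ y (Finset.mem_erase.mpr ⟨hy, Finset.mem_univ y⟩)
  -- a third item z
  have hzne : (Finset.univ \ {x₁, x₂} : Finset (Fin n)).Nonempty := by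
    rw [← Finset.card_pos, Finset.card_sdiff_of_subset (Finset.subset_univ _), Finset.card_univ,
      Fintype.card_fin, Finset.card_pair (Ne.symm hx₂x₁)]
    omega
  obtain ⟨z, hzmem⟩ := hzne
  have hz1 : z ≠ x₁ := by
    have := Finset.mem_sdiff.mp hzmem
    simp only [Finset.mem_insert, Finset.mem_singleton, not_or] at this
    exact this.2.1
  have hz2 : z ≠ x₂ := by
    have := Finset.mem_sdiff.mp hzmem
    simp only [Finset.mem_insert, Finset.mem_singleton, not_or] at this
    exact this.2.2
  -- Key combinatorial fact: success on good thresholds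
  have hsucc : ∀ (π : Equiv.Perm (Fin n)) (τ : Fin n),
      π x₂ ≤ τ → τ < π x₁ → ThresholdSuccess τ v π := by
    intro π τ h1 h2
    refine ⟨π x₁, h2, ?_, ?_, ?_⟩
    · intro s hτs hst hall
      have hs1 : π.symm s ≠ x₁ := by
        intro he
        have : s = π x₁ := by rw [← he, Equiv.apply_symm_apply]
        exact absurd (this ▸ hst) (lt_irrefl _)
      have hlt := hall (π x₂) (lt_of_le_of_lt h1 hτs)
      rw [Equiv.symm_apply_apply] at hlt
      exact absurd hlt (not_lt.mpr (hsec _ hs1))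
    · intro s hs
      rw [Equiv.symm_apply_apply]
      have hs1 : π.symm s ≠ x₁ := by
        intro he
        have : s = π x₁ := by rw [← he, Equiv.apply_symm_apply]
        exact absurd (this ▸ hs) (lt_irrefl _)
      exact lt_of_le_of_ne (hmax _) (fun he => hs1 (hv he))
    · intro y
      rw [Equiv.symm_apply_apply]
      exact hmax y
  -- lower bound each threshold's success probability
  have hstep1 : ∀ τ : Fin n,
      prOf μ {π : Equiv.Perm (Fin n) | π x₂ ≤ τ ∧ τ < π x₁} ≤
        prOf μ {π | ThresholdSuccess τ v π} := by
    intro τ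
    exact prOf_mono hμ0 (fun π hπ => hsucc π τ hπ.1 hπ.2)
  -- rewrite the sum over thresholds as a sum over items
  have hswap : ∑ τ : Fin n, prOf μ {π : Equiv.Perm (Fin n) | π x₂ ≤ τ ∧ τ < π x₁}
      = ∑ y : Fin n, prOf μ {π : Equiv.Perm (Fin n) | π x₂ ≤ π y ∧ π y < π x₁} := by
    simp only [prOf, Set.mem_setOf_eq]
    rw [Finset.sum_comm]
    conv_rhs => rw [Finset.sum_comm]
    apply Finset.sum_congr rfl
    intro π _
    convert (Fintype.sum_equiv π
      (fun y : Fin n => if π x₂ ≤ π y ∧ π y < π x₁ then μ π else 0)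
      (fun τ : Fin n => if π x₂ ≤ τ ∧ τ < π x₁ then μ π else 0)
      (fun y => rfl)).symm using 2 <;> (split_ifs <;> rfl)
  -- bound for intermediate items
  have hmid : ∀ y : Fin n, y ≠ x₁ → y ≠ x₂ →
      (1 - δ) / 6 ≤ prOf μ {π : Equiv.Perm (Fin n) | π x₂ ≤ π y ∧ π y < π x₁} := by
    intro y hy1 hy2
    refine (uiop_bound hμ0 h x₂ y x₁ (Ne.symm hy2) hx₂x₁ hy1).trans (prOf_mono hμ0 ?_)
    intro π hπ
    exact ⟨le_of_lt hπ.1, hπ.2⟩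
  -- bound for y = x₂ : probability that x₂ precedes x₁ is at least (1-δ)/2
  have hA : (1 - δ) / 2 ≤ prOf μ {π : Equiv.Perm (Fin n) | π x₂ ≤ π x₂ ∧ π x₂ < π x₁} := by
    have e1 := uiop_bound hμ0 h z x₂ x₁ hz2 hz1 hx₂x₁
    have e2 := uiop_bound hμ0 h x₂ z x₁ (Ne.symm hz2) hx₂x₁ hz1
    have e3 := uiop_bound hμ0 h x₂ x₁ z hx₂x₁ (Ne.symm hz2) (Ne.symm hz1)
    have hsum3 : prOf μ {π : Equiv.Perm (Fin n) | π z < π x₂ ∧ π x₂ < π x₁}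
        + prOf μ {π : Equiv.Perm (Fin n) | π x₂ < π z ∧ π z < π x₁}
        + prOf μ {π : Equiv.Perm (Fin n) | π x₂ < π x₁ ∧ π x₁ < π z}
        ≤ prOf μ {π : Equiv.Perm (Fin n) | π x₂ ≤ π x₂ ∧ π x₂ < π x₁} := by
      simp only [prOf, ← Finset.sum_add_distrib]
      apply Finset.sum_le_sum
      intro π _
      simp only [Set.mem_setOf_eq, le_refl, true_and, Fin.lt_def]
      have hv1 : (π z).val ≠ (π x₂).val := fun he => hz2 (π.injective (Fin.val_injective he))
      have hv2 : (π z).val ≠ (π x₁).val := fun he => hz1 (π.injective (Fin.val_injective he))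
      have hv3 : (π x₂).val ≠ (π x₁).val := fun he => hx₂x₁ (π.injective (Fin.val_injective he))
      have hμπ := hμ0 π
      split_ifs <;> first | linarith | (exfalso; omega)
    calc (1 - δ) / 2 = (1 - δ) / 6 + (1 - δ) / 6 + (1 - δ) / 6 := by ring
      _ ≤ _ := by
          refine le_trans ?_ hsum3
          gcongr
  -- total bound
  have htotal : (n : ℝ) * ((1 - δ) / 6) ≤
      ∑ τ : Fin n, prOf μ {π : Equiv.Perm (Fin n) | π x₂ ≤ τ ∧ τ < π x₁} := by
    rw [hswap]
    have hsub : insert x₂ (Finset.univ \ {x₁, x₂} : Finset (Fin n)) ⊆ Finset.univ :=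
      Finset.subset_univ _
    have hx₂notin : x₂ ∉ (Finset.univ \ {x₁, x₂} : Finset (Fin n)) := by
      simp
    have hstep : ∑ y ∈ insert x₂ (Finset.univ \ {x₁, x₂} : Finset (Fin n)),
          prOf μ {π : Equiv.Perm (Fin n) | π x₂ ≤ π y ∧ π y < π x₁}
        ≤ ∑ y : Fin n, prOf μ {π : Equiv.Perm (Fin n) | π x₂ ≤ π y ∧ π y < π x₁} := by
      apply Finset.sum_le_sum_of_subset_of_nonneg hsub
      intro i _ _
      exact prOf_nonneg hμ0 _
    rw [Finset.sum_insert hx₂notin] at hstep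
    have hcard : ((Finset.univ \ {x₁, x₂} : Finset (Fin n)).card : ℝ) = (n : ℝ) - 2 := by
      rw [Finset.card_sdiff_of_subset (Finset.subset_univ _), Finset.card_univ, Fintype.card_fin,
        Finset.card_pair (Ne.symm hx₂x₁)]
      have : 2 ≤ n := by omega
      push_cast [Nat.cast_sub this]
      ring
    have hrest : ((n : ℝ) - 2) * ((1 - δ) / 6) ≤
        ∑ y ∈ (Finset.univ \ {x₁, x₂} : Finset (Fin n)),
          prOf μ {π : Equiv.Perm (Fin n) | π x₂ ≤ π y ∧ π y < π x₁} := by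
      have := Finset.card_nsmul_le_sum (Finset.univ \ {x₁, x₂} : Finset (Fin n))
        (fun y => prOf μ {π : Equiv.Perm (Fin n) | π x₂ ≤ π y ∧ π y < π x₁})
        ((1 - δ) / 6) ?_
      · rw [nsmul_eq_mul, hcard] at this
        exact this
      · intro y hy
        simp only [Finset.mem_sdiff, Finset.mem_insert, Finset.mem_singleton, not_or] at hy
        exact hmid y hy.2.1 hy.2.2
    have h1δ : 0 ≤ 1 - δ := by linarith
    calc (n : ℝ) * ((1 - δ) / 6)
        ≤ (1 - δ) / 2 + ((n : ℝ) - 2) * ((1 - δ) / 6) := by nlinarith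
      _ ≤ prOf μ {π : Equiv.Perm (Fin n) | π x₂ ≤ π x₂ ∧ π x₂ < π x₁}
          + ∑ y ∈ (Finset.univ \ {x₁, x₂} : Finset (Fin n)),
            prOf μ {π : Equiv.Perm (Fin n) | π x₂ ≤ π y ∧ π y < π x₁} := by
          gcongr
      _ ≤ _ := hstep
  -- assemble
  have hfinal : (1 - δ) / 6 ≤ (1 / (n : ℝ)) * ∑ τ : Fin n, prOf μ {π | ThresholdSuccess τ v π} := by
    have hsumle : ∑ τ : Fin n, prOf μ {π : Equiv.Perm (Fin n) | π x₂ ≤ τ ∧ τ < π x₁}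
        ≤ ∑ τ : Fin n, prOf μ {π | ThresholdSuccess τ v π} :=
      Finset.sum_le_sum fun τ _ => hstep1 τ
    have : (n : ℝ) * ((1 - δ) / 6) ≤ ∑ τ : Fin n, prOf μ {π | ThresholdSuccess τ v π} :=
      le_trans htotal hsumle
    have h2 := mul_le_mul_of_nonneg_left this (le_of_lt (by positivity : (0:ℝ) < 1 / (n : ℝ)))
    have h3 : (1 / (n : ℝ)) * ((n : ℝ) * ((1 - δ) / 6)) = (1 - δ) / 6 := by
      field_simp
    linarith
  refine le_trans ?_ hfinal
  rw [div_le_div_iff₀ (by positivity) (by norm_num)]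
  nlinarith [sq_nonneg δ, sq_nonneg (1 - δ)]
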